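/- arXiv:1303.0149 — 2 statements merged into one kernel-verified Lean document; each statement's English description precedes it below -/
import Mathlib

section
/- Let p ≥ 0 and q ≥ 1 be integers and n = p+q+2. Let u ∈ ℂ^p, v ∈ ℂ^q be row vectors, w ∈ ℂ with conj(w) = -w, and t ∈ ℝ. Let x₀ = (0,…,0,1)ᵀ ∈ ℂ^n. Then the vector exp(X_t)·exp(N_{u,v,w})·x₀ (matrix-vector multiplication) has first entry sinh t + (1/2)e^t(|u|² - |v|²) + e^t w, its next p entries are conj(u₁),…,conj(u_p), its next q entries are -conj(v₁),…,-conj(v_q), and its last entry is cosh t + (1/2)e^t(|u|² - |v|²) + e^t w, where |u|² = Σ_j |u_j|² and |v|² = Σ_j |v_j|². -/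
open scoped ComplexConjugate

/-- The matrix `N_{u,v,w}` over `ℂ`, written in block form with row/column blocks of
sizes `1, p, q, 1` (the index type `Fin 1 ⊕ Fin p ⊕ Fin q ⊕ Fin 1` has `p + q + 2` elements):
`N = [[-w, u, v, w], [-u*, 0, 0, u*], [v*, 0, 0, -v*], [-w, u, v, w]]`. -/
def Nmat {p q : ℕ} (u : Fin p → ℂ) (v : Fin q → ℂ) (w : ℂ) :
    Matrix (Fin 1 ⊕ Fin p ⊕ Fin q ⊕ Fin 1) (Fin 1 ⊕ Fin p ⊕ Fin q ⊕ Fin 1) ℂ :=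
  fun i j =>
    match i, j with
    | Sum.inl _, Sum.inl _ => -w
    | Sum.inl _, Sum.inr (Sum.inl j) => u j
    | Sum.inl _, Sum.inr (Sum.inr (Sum.inl j)) => v j
    | Sum.inl _, Sum.inr (Sum.inr (Sum.inr _)) => w
    | Sum.inr (Sum.inl i), Sum.inl _ => -(conj (u i))
    | Sum.inr (Sum.inl i), Sum.inr (Sum.inr (Sum.inr _)) => conj (u i)
    | Sum.inr (Sum.inl _), _ => 0
    | Sum.inr (Sum.inr (Sum.inl i)), Sum.inl _ => conj (v i)
    | Sum.inr (Sum.inr (Sum.inl i)), Sum.inr (Sum.inr (Sum.inr _)) => -(conj (v i))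
    | Sum.inr (Sum.inr (Sum.inl _)), _ => 0
    | Sum.inr (Sum.inr (Sum.inr _)), Sum.inl _ => -w
    | Sum.inr (Sum.inr (Sum.inr _)), Sum.inr (Sum.inl j) => u j
    | Sum.inr (Sum.inr (Sum.inr _)), Sum.inr (Sum.inr (Sum.inl j)) => v j
    | Sum.inr (Sum.inr (Sum.inr _)), Sum.inr (Sum.inr (Sum.inr _)) => w

/-- The matrix `X_t` (value `t` in the `(1, p+q+2)` and `(p+q+2, 1)` entries, `0` otherwise),
realized on the block index type `Fin 1 ⊕ Fin p ⊕ Fin q ⊕ Fin 1`. -/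
def Xmat (p q : ℕ) (t : ℝ) :
    Matrix (Fin 1 ⊕ Fin p ⊕ Fin q ⊕ Fin 1) (Fin 1 ⊕ Fin p ⊕ Fin q ⊕ Fin 1) ℂ :=
  fun i j =>
    match i, j with
    | Sum.inl _, Sum.inr (Sum.inr (Sum.inr _)) => (t : ℂ)
    | Sum.inr (Sum.inr (Sum.inr _)), Sum.inl _ => (t : ℂ)
    | _, _ => 0

/-- The vector `x₀ = (0, …, 0, 1)ᵀ`. -/
def xZero (p q : ℕ) : (Fin 1 ⊕ Fin p ⊕ Fin q ⊕ Fin 1) → ℂ :=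
  Sum.elim (fun _ => 0) (Sum.elim (fun _ => 0) (Sum.elim (fun _ => 0) fun _ => 1))

/-!
`N` is nilpotent on `x₀`: `N x₀ = (w, ū, -v̄, w)`, `N² x₀ = (|u|² - |v|²) (1, 0, 0, 1)` and
`N³ x₀ = 0`, so `exp N · x₀ = x₀ + N x₀ + ½ N² x₀`. The matrix `X_t` kills the two middle blocks and
has eigenvectors `(1, 0, 0, ±1)` with eigenvalues `±t`, so `exp X_t` fixes the middle blocks and acts
on the first and last entries by the hyperbolic rotation `[[cosh t, sinh t], [sinh t, cosh t]]`.
-/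

open NormedSpace Matrix Finset

namespace Matrix

variable {𝕂 ι : Type*} [RCLike 𝕂] [Fintype ι] [DecidableEq ι]

theorem hasSum_exp_mulVec (A : Matrix ι ι 𝕂) (x : ι → 𝕂) :
    HasSum (fun n : ℕ => (n.factorial⁻¹ : 𝕂) • (A ^ n *ᵥ x)) (exp A *ᵥ x) := by
  have hA : HasSum (fun n : ℕ => (n.factorial⁻¹ : 𝕂) • A ^ n) (exp A) := by
    open scoped Norms.Operator in exact exp_series_hasSum_exp' A
  have hAx : HasSum (fun n : ℕ => ((n.factorial⁻¹ : 𝕂) • A ^ n) *ᵥ x) (exp A *ᵥ x) :=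
    hA.map (mulVec.addMonoidHomLeft x) (continuous_id.matrix_mulVec continuous_const)
  simpa only [smul_mulVec] using hAx

theorem exp_mulVec_eq_sum_of_pow_mulVec_eq_zero {A : Matrix ι ι 𝕂} {x : ι → 𝕂} {k : ℕ}
    (h : A ^ k *ᵥ x = 0) :
    exp A *ᵥ x = ∑ i ∈ range k, (i.factorial⁻¹ : 𝕂) • (A ^ i *ᵥ x) := by
  refine (hasSum_exp_mulVec A x).unique (hasSum_sum_of_ne_finset_zero fun i hi => ?_)
  obtain ⟨j, rfl⟩ := Nat.exists_eq_add_of_le (not_lt.mp (mem_range.not.mp hi))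
  rw [add_comm, pow_add, ← mulVec_mulVec, h, mulVec_zero, smul_zero]

theorem exp_mulVec_of_mulVec_eq_smul {A : Matrix ι ι 𝕂} {x : ι → 𝕂} {c : 𝕂}
    (h : A *ᵥ x = c • x) : exp A *ᵥ x = exp c • x := by
  refine (hasSum_exp_mulVec A x).unique ?_
  have hpow : ∀ n : ℕ, A ^ n *ᵥ x = c ^ n • x := by
    intro n
    induction n with
    | zero => simp
    | succ n ih => rw [pow_succ', ← mulVec_mulVec, ih, mulVec_smul, h, smul_smul, pow_succ]
  simpa only [hpow, smul_smul, smul_eq_mul] using (exp_series_hasSum_exp' (𝕂 := 𝕂) c).smul_const x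

end Matrix

section Blocks

variable {p q : ℕ}

def blockVec (a : ℂ) (x : Fin p → ℂ) (y : Fin q → ℂ) (b : ℂ) :
    Fin 1 ⊕ Fin p ⊕ Fin q ⊕ Fin 1 → ℂ :=
  Sum.elim (fun _ => a) (Sum.elim x (Sum.elim y fun _ => b))

theorem xZero_eq_blockVec : xZero p q = blockVec 0 0 0 1 := rfl

theorem Xmat_mulVec_blockVec (t : ℝ) (a : ℂ) (x : Fin p → ℂ) (y : Fin q → ℂ) (b : ℂ) :
    Xmat p q t *ᵥ blockVec a x y b = blockVec (t * b) 0 0 (t * a) := by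
  funext i
  rcases i with _ | _ | _ | _ <;>
    simp [blockVec, Xmat, mulVec, dotProduct, Fintype.sum_sum_type]

theorem Nmat_mulVec_blockVec (u : Fin p → ℂ) (v : Fin q → ℂ) (w a : ℂ) (x : Fin p → ℂ)
    (y : Fin q → ℂ) (b : ℂ) :
    Nmat u v w *ᵥ blockVec a x y b =
      blockVec (w * (b - a) + u ⬝ᵥ x + v ⬝ᵥ y) (fun i => conj (u i) * (b - a))
        (fun i => conj (v i) * (a - b)) (w * (b - a) + u ⬝ᵥ x + v ⬝ᵥ y) := by
  funext i
  rcases i with _ | _ | _ | _ <;>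
    simp [blockVec, Nmat, mulVec, dotProduct, Fintype.sum_sum_type] <;> ring

theorem blockVec_add (a a' : ℂ) (x x' : Fin p → ℂ) (y y' : Fin q → ℂ) (b b' : ℂ) :
    blockVec a x y b + blockVec a' x' y' b' = blockVec (a + a') (x + x') (y + y') (b + b') := by
  funext i
  rcases i with _ | _ | _ | _ <;> rfl

theorem smul_blockVec (c a : ℂ) (x : Fin p → ℂ) (y : Fin q → ℂ) (b : ℂ) :
    c • blockVec a x y b = blockVec (c * a) (c • x) (c • y) (c * b) := by
  funext i
  rcases i with _ | _ | _ | _ <;> rfl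

theorem exp_Xmat_mulVec_blockVec (t : ℝ) (a : ℂ) (x : Fin p → ℂ) (y : Fin q → ℂ) (b : ℂ) :
    exp (Xmat p q t) *ᵥ blockVec a x y b =
      blockVec (Complex.cosh t * a + Complex.sinh t * b) x y
        (Complex.sinh t * a + Complex.cosh t * b) := by
  have hplus (c : ℂ) : Xmat p q t *ᵥ blockVec c 0 0 c = (t : ℂ) • blockVec c 0 0 c := by
    rw [Xmat_mulVec_blockVec, smul_blockVec, smul_zero, smul_zero]
  have hminus (c : ℂ) : Xmat p q t *ᵥ blockVec c 0 0 (-c) = (-t : ℂ) • blockVec c 0 0 (-c) := by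
    rw [Xmat_mulVec_blockVec, smul_blockVec, smul_zero, smul_zero]
    congr 1 <;> ring
  have hzero : Xmat p q t *ᵥ blockVec 0 x y 0 = (0 : ℂ) • blockVec 0 x y 0 := by
    rw [Xmat_mulVec_blockVec, smul_blockVec, zero_smul, zero_smul]
    congr 1 <;> simp
  have hsplit : blockVec a x y b = blockVec ((a + b) / 2) 0 0 ((a + b) / 2) +
      blockVec ((a - b) / 2) 0 0 (-((a - b) / 2)) + blockVec 0 x y 0 := by
    rw [blockVec_add, blockVec_add]
    congr 1
    · ring
    · simp
    · simp
    · ring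
  rw [hsplit, mulVec_add, mulVec_add, exp_mulVec_of_mulVec_eq_smul (hplus _),
    exp_mulVec_of_mulVec_eq_smul (hminus _), exp_mulVec_of_mulVec_eq_smul hzero,
    smul_blockVec, smul_blockVec, smul_blockVec, blockVec_add, blockVec_add,
    ← Complex.exp_eq_exp_ℂ, Complex.cosh, Complex.sinh]
  congr 1
  · ring
  · simp
  · simp
  · ring

theorem exp_Nmat_mulVec_xZero (u : Fin p → ℂ) (v : Fin q → ℂ) (w : ℂ) :
    exp (Nmat u v w) *ᵥ xZero p q =
      let s : ℂ := (1 / 2 : ℂ) * ((∑ j, ‖u j‖ ^ 2 : ℝ) - (∑ j, ‖v j‖ ^ 2 : ℝ))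
      blockVec (s + w) (fun j => conj (u j)) (fun j => -(conj (v j))) (1 + s + w) := by
  set S : ℂ := (∑ j, ‖u j‖ ^ 2 : ℝ) - (∑ j, ‖v j‖ ^ 2 : ℝ)
  have hN1 : Nmat u v w *ᵥ xZero p q =
      blockVec w (fun j => conj (u j)) (fun j => -(conj (v j))) w := by
    rw [xZero_eq_blockVec, Nmat_mulVec_blockVec]
    congr 1 <;> simp
  have hN2 : Nmat u v w *ᵥ blockVec w (fun j => conj (u j)) (fun j => -(conj (v j))) w =
      blockVec S 0 0 S := by
    rw [Nmat_mulVec_blockVec]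
    funext i
    rcases i with _ | _ | _ | _ <;> simp [blockVec, S, dotProduct, Complex.mul_conj', sub_eq_add_neg]
  have hN3 : Nmat u v w *ᵥ blockVec S 0 0 S = 0 := by
    rw [Nmat_mulVec_blockVec]
    funext i
    rcases i with _ | _ | _ | _ <;> simp [blockVec]
  rw [exp_mulVec_eq_sum_of_pow_mulVec_eq_zero (k := 3) (by
    rw [pow_succ', pow_two, ← mulVec_mulVec, ← mulVec_mulVec, hN1, hN2, hN3])]
  simp only [sum_range_succ, sum_range_zero, pow_zero, pow_one, pow_two,
    ← mulVec_mulVec, hN1, hN2, one_mulVec, zero_add]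
  rw [xZero_eq_blockVec, smul_blockVec, smul_blockVec, smul_blockVec, blockVec_add, blockVec_add]
  congr 1 <;> simp [Nat.factorial] <;> ring

end Blocks

theorem exp_Xt_exp_N_mulVec_xZero_general (p q : ℕ)
    (u : Fin p → ℂ) (v : Fin q → ℂ) (w : ℂ) (t : ℝ) :
    (NormedSpace.exp (Xmat p q t) * NormedSpace.exp (Nmat u v w)).mulVec (xZero p q) =
      Sum.elim
        (fun _ => (Real.sinh t : ℂ) +
          (1 / 2 : ℂ) * Real.exp t * ((∑ j, ‖u j‖ ^ 2 : ℝ) - (∑ j, ‖v j‖ ^ 2 : ℝ)) +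
          Real.exp t * w)
        (Sum.elim (fun j => conj (u j))
          (Sum.elim (fun j => -(conj (v j)))
            (fun _ => (Real.cosh t : ℂ) +
              (1 / 2 : ℂ) * Real.exp t * ((∑ j, ‖u j‖ ^ 2 : ℝ) - (∑ j, ‖v j‖ ^ 2 : ℝ)) +
              Real.exp t * w))) := by
  rw [← mulVec_mulVec, exp_Nmat_mulVec_xZero, exp_Xmat_mulVec_blockVec]
  set s : ℂ := (1 / 2 : ℂ) * ((∑ j, ‖u j‖ ^ 2 : ℝ) - (∑ j, ‖v j‖ ^ 2 : ℝ))
  have hexp : Complex.cosh t + Complex.sinh t = Real.exp t := by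
    rw [Complex.cosh_add_sinh, Complex.ofReal_exp]
  simp only [blockVec, Complex.ofReal_sinh, Complex.ofReal_cosh]
  congr 1
  · funext _
    linear_combination (s + w) * hexp
  · congr 2
    funext _
    linear_combination (s + w) * hexp

/-- The vector `exp(X_t) · exp(N_{u,v,w}) · x₀` has first entry
`sinh t + (1/2)eᵗ(|u|² - |v|²) + eᵗ w`, its next `p` entries are `conj u₁, …, conj u_p`,
its next `q` entries are `-conj v₁, …, -conj v_q`, and its last entry is
`cosh t + (1/2)eᵗ(|u|² - |v|²) + eᵗ w`. -/
theorem exp_Xt_exp_N_mulVec_xZero (p q : ℕ) (hp : 0 ≤ p) (hq : 1 ≤ q)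
    (u : Fin p → ℂ) (v : Fin q → ℂ) (w : ℂ) (hw : conj w = -w) (t : ℝ) :
    (NormedSpace.exp (Xmat p q t) * NormedSpace.exp (Nmat u v w)).mulVec (xZero p q) =
      Sum.elim
        (fun _ => (Real.sinh t : ℂ) +
          (1 / 2 : ℂ) * Real.exp t * ((∑ j, ‖u j‖ ^ 2 : ℝ) - (∑ j, ‖v j‖ ^ 2 : ℝ)) +
          Real.exp t * w)
        (Sum.elim (fun j => conj (u j))
          (Sum.elim (fun j => -(conj (v j)))
            (fun _ => (Real.cosh t : ℂ) +
              (1 / 2 : ℂ) * Real.exp t * ((∑ j, ‖u j‖ ^ 2 : ℝ) - (∑ j, ‖v j‖ ^ 2 : ℝ)) +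
              Real.exp t * w))) :=
  exp_Xt_exp_N_mulVec_xZero_general p q u v w t
end

section
/- Let p ≥ 0 and q ≥ 1 be integers and n = p+q+2, and let J = diag(I_{p+1}, -I_{q+1}). For every row vector u ∈ ℂ^p, every row vector v ∈ ℂ^q, every w ∈ ℂ with conj(w) = -w, and every t ∈ ℝ, the matrix g = exp(X_t)·exp(N_{u,v,w}) satisfies gᴴ J g = J; that is, g preserves the Hermitian form of signature (p+1, q+1) on ℂ^n. -/
open Matrix
open scoped ComplexConjugate

/-- The diagonal matrix `J = diag(I_{p+1}, -I_{q+1})`, the Gram matrix of the Hermitian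
form of signature `(p+1, q+1)` on `ℂ^{p+q+2}`. -/
def Jmat (p q : ℕ) :
    Matrix (Fin 1 ⊕ Fin p ⊕ Fin q ⊕ Fin 1) (Fin 1 ⊕ Fin p ⊕ Fin q ⊕ Fin 1) ℂ :=
  Matrix.diagonal
    (Sum.elim (fun _ => 1) (Sum.elim (fun _ => 1) (Sum.elim (fun _ => -1) fun _ => -1)))

/-! A matrix `A` with `Aᴴ J = -(J A)` intertwines with `-Aᴴ` through `J`, hence so do the
exponentials: `J exp A = exp (-Aᴴ) J`, i.e. `(exp A)ᴴ J exp A = J`. Both `X_t` and `N_{u,v,w}`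
satisfy this skewness condition for `J = diag(I, -I)`, and the matrices preserving the form
`J` are closed under products. -/

namespace Matrix

variable {m α 𝕜 : Type*} [Fintype m] [DecidableEq m]

def formIsometries [Semiring α] [StarRing α] (J : Matrix m m α) : Submonoid (Matrix m m α) where
  carrier := {g | gᴴ * J * g = J}
  one_mem' := by simp
  mul_mem' {g h} (hg : gᴴ * J * g = J) (hh : hᴴ * J * h = J) :=
    show (g * h)ᴴ * J * (g * h) = J by
      calc (g * h)ᴴ * J * (g * h) = hᴴ * (gᴴ * J * g) * h := by
            simp only [conjTranspose_mul, Matrix.mul_assoc]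
        _ = J := by rw [hg, hh]

theorem exp_mem_formIsometries [RCLike 𝕜] {A J : Matrix m m 𝕜} (hA : Aᴴ * J = -(J * A)) :
    NormedSpace.exp A ∈ formIsometries J := by
  have hJ : SemiconjBy J A (-Aᴴ) := by
    rw [SemiconjBy, neg_mul, hA, neg_neg]
  have := open scoped Norms.Operator in hJ.exp_neg_mul_mul_exp_eq_self
  rw [neg_neg] at this
  show (NormedSpace.exp A)ᴴ * J * NormedSpace.exp A = J
  rwa [← exp_conjTranspose]

theorem conjTranspose_mul_diagonal_eq_neg_iff [Ring α] [StarRing α] {A : Matrix m m α}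
    {d : m → α} :
    Aᴴ * diagonal d = -(diagonal d * A) ↔ ∀ i j, star (A j i) * d j = -(d i * A i j) := by
  simp [← Matrix.ext_iff, mul_diagonal, diagonal_mul]

end Matrix

theorem conjTranspose_Xmat_mul_Jmat (p q : ℕ) (t : ℝ) :
    (Xmat p q t)ᴴ * Jmat p q = -(Jmat p q * Xmat p q t) := by
  rw [Jmat, conjTranspose_mul_diagonal_eq_neg_iff]
  rintro (i | i | i | i) (j | j | j | j) <;> simp [Xmat]

theorem conjTranspose_Nmat_mul_Jmat {p q : ℕ} (u : Fin p → ℂ) (v : Fin q → ℂ) {w : ℂ}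
    (hw : conj w = -w) : (Nmat u v w)ᴴ * Jmat p q = -(Jmat p q * Nmat u v w) := by
  rw [Jmat, conjTranspose_mul_diagonal_eq_neg_iff]
  rintro (i | i | i | i) (j | j | j | j) <;> simp [Nmat, hw]

theorem exp_Xt_exp_N_preserves_form_general (p q : ℕ)
    (u : Fin p → ℂ) (v : Fin q → ℂ) (w : ℂ) (hw : conj w = -w) (t : ℝ) :
    (NormedSpace.exp (Xmat p q t) * NormedSpace.exp (Nmat u v w))ᴴ * Jmat p q *
        (NormedSpace.exp (Xmat p q t) * NormedSpace.exp (Nmat u v w)) =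
      Jmat p q :=
  mul_mem (exp_mem_formIsometries (conjTranspose_Xmat_mul_Jmat p q t))
    (exp_mem_formIsometries (conjTranspose_Nmat_mul_Jmat u v hw))

/-- For every row vector `u ∈ ℂ^p`, every row vector `v ∈ ℂ^q`, every `w ∈ ℂ` with
`conj w = -w` and every `t ∈ ℝ`, the matrix `g = exp(X_t) · exp(N_{u,v,w})` satisfies
`gᴴ J g = J`; that is, `g` preserves the Hermitian form of signature `(p+1, q+1)`. -/
theorem exp_Xt_exp_N_preserves_form (p q : ℕ) (hp : 0 ≤ p) (hq : 1 ≤ q)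
    (u : Fin p → ℂ) (v : Fin q → ℂ) (w : ℂ) (hw : conj w = -w) (t : ℝ) :
    (NormedSpace.exp (Xmat p q t) * NormedSpace.exp (Nmat u v w))ᴴ * Jmat p q *
        (NormedSpace.exp (Xmat p q t) * NormedSpace.exp (Nmat u v w)) =
      Jmat p q :=
  exp_Xt_exp_N_preserves_form_general p q u v w hw t
end
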